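/- Let P ≥ 1 and M ≥ 3P. For p = 1, …, P let G_p be an M×3 complex matrix of rank 3 and ρ_p an invertible 3×3 complex matrix, and set D = Σ_{p=1}^{P} G_p ρ_p G_pᵀ (where ᵀ denotes ordinary transpose). If rank(D) = 3P, then the column space of D is the direct sum of the column spaces of G_1, …, G_P; in particular, the column space of G_p is contained in the column space of D for every p = 1, …, P. -/
import Mathlib


open Matrix

/-- The column space (range) of a complex matrix, i.e. the range of the associated linear map
`v ↦ A *ᵥ v`, which is the span of the columns of `A`. -/
noncomputable def colSpace {M n : ℕ} (A : Matrix (Fin M) (Fin n) ℂ) :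
    Submodule ℂ (Fin M → ℂ) :=
  LinearMap.range A.mulVecLin

private lemma sum_mulVec_aux {m n : ℕ} {ι : Type*} (s : Finset ι)
    (A : ι → Matrix (Fin m) (Fin n) ℂ) (v : Fin n → ℂ) :
    (∑ i ∈ s, A i) *ᵥ v = ∑ i ∈ s, A i *ᵥ v := by
  ext j
  simp only [Matrix.mulVec, dotProduct, Finset.sum_apply, Finset.sum_mul,
    Matrix.sum_apply]
  rw [Finset.sum_comm]

private lemma finrank_finset_sup_le {V : Type*} [AddCommGroup V] [Module ℂ V]
    [FiniteDimensional ℂ V] {ι : Type*} [DecidableEq ι] (s : Finset ι)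
    (C : ι → Submodule ℂ V) :
    Module.finrank ℂ ↥(s.sup C) ≤ ∑ i ∈ s, Module.finrank ℂ ↥(C i) := by
  induction s using Finset.induction with
  | empty => simp
  | @insert a s ha ih =>
    rw [Finset.sup_insert, Finset.sum_insert ha]
    have h := Submodule.finrank_sup_add_finrank_inf_eq (C a) (s.sup C)
    omega

/-- If `D = Σ_p G_p ρ_p G_pᵀ` with each `G_p` of rank 3 and each `ρ_p` invertible, and
`rank D = 3P`, then the column space of `D` is the (internal) direct sum of the column spaces
of the `G_p`; in particular each column space of `G_p` is contained in that of `D`. -/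
theorem range_of_multiple_inclusions {P M : ℕ} (hP : 1 ≤ P) (hM : 3 * P ≤ M)
    (G : Fin P → Matrix (Fin M) (Fin 3) ℂ) (ρ : Fin P → Matrix (Fin 3) (Fin 3) ℂ)
    (hG : ∀ p, (G p).rank = 3) (hρ : ∀ p, IsUnit (ρ p).det)
    (D : Matrix (Fin M) (Fin M) ℂ) (hD : D = ∑ p, G p * ρ p * (G p)ᵀ)
    (hrank : D.rank = 3 * P) :
    colSpace D = (⨆ p, colSpace (G p)) ∧
      iSupIndep (fun p => colSpace (G p)) ∧
      ∀ p, colSpace (G p) ≤ colSpace D := by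
  classical
  set C : Fin P → Submodule ℂ (Fin M → ℂ) := fun p => colSpace (G p) with hC
  -- finrank facts
  have hfG : ∀ p, Module.finrank ℂ (C p) = 3 := fun p => hG p
  have hfD : Module.finrank ℂ (colSpace D) = 3 * P := hrank
  -- colSpace D ≤ ⨆ p, C p
  have hle : colSpace D ≤ ⨆ p, C p := by
    rintro x ⟨v, rfl⟩
    show D.mulVecLin v ∈ _
    rw [hD]
    have : (∑ p, G p * ρ p * (G p)ᵀ).mulVecLin v
        = ∑ p, (G p).mulVec ((ρ p * (G p)ᵀ).mulVec v) := by
      simp only [Matrix.mulVecLin_apply, sum_mulVec_aux, Matrix.mulVec_mulVec,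
        Matrix.mul_assoc]
    rw [this]
    refine Submodule.sum_mem _ fun p _ => ?_
    exact le_iSup C p ⟨(ρ p * (G p)ᵀ).mulVec v, rfl⟩
  -- dimension of the sup
  have hsup_le : ∀ (s : Finset (Fin P)),
      Module.finrank ℂ ↥(s.sup C) ≤ 3 * s.card := by
    intro s
    calc Module.finrank ℂ ↥(s.sup C) ≤ ∑ i ∈ s, Module.finrank ℂ ↥(C i) :=
          finrank_finset_sup_le s C
      _ = 3 * s.card := by simp [hfG, mul_comm]
  have hiSup_eq : (⨆ p, C p) = Finset.univ.sup C := by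
    rw [Finset.sup_eq_iSup]; simp
  have hge : 3 * P ≤ Module.finrank ℂ ↥(⨆ p, C p) := by
    rw [← hfD]; exact Submodule.finrank_mono hle
  have hfsup : Module.finrank ℂ ↥(⨆ p, C p) = 3 * P := by
    have h1 := hsup_le Finset.univ
    rw [← hiSup_eq] at h1
    simp only [Finset.card_univ, Fintype.card_fin] at h1
    omega
  have heq : colSpace D = ⨆ p, C p :=
    Submodule.eq_of_le_of_finrank_le hle (by omega)
  refine ⟨heq, ?_, fun p => heq ▸ le_iSup C p⟩
  -- independence by dimension counting
  intro p
  set R : Submodule ℂ (Fin M → ℂ) := ⨆ q, ⨆ _ : q ≠ p, C q with hR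
  have hRsup : R = (Finset.univ.erase p).sup C := by
    rw [Finset.sup_eq_iSup]
    simp [hR, Finset.mem_erase]
  have hRle : Module.finrank ℂ R ≤ 3 * (P - 1) := by
    rw [hRsup]
    have := hsup_le (Finset.univ.erase p)
    simpa [Finset.card_erase_of_mem] using this
  have hsup_eq : C p ⊔ R = ⨆ q, C q := by
    apply le_antisymm
    · exact sup_le (le_iSup C p) (iSup_le fun q => iSup_le fun _ => le_iSup C q)
    · refine iSup_le fun q => ?_
      rcases eq_or_ne q p with rfl | hq
      · exact le_sup_left
      · exact le_trans (le_iSup₂ (f := fun q (_ : q ≠ p) => C q) q hq) le_sup_right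
  have hkey := Submodule.finrank_sup_add_finrank_inf_eq (C p) R
  rw [hsup_eq, hfsup, hfG p] at hkey
  have hinf : Module.finrank ℂ ↥(C p ⊓ R) = 0 := by omega
  rw [disjoint_iff]
  exact Submodule.finrank_eq_zero.mp hinf
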